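/- arXiv:2107.00076 — 4 statements merged into one kernel-verified Lean document; each statement's English description precedes it below -/
import Mathlib

section
/- Let Γ be a strongly regular graph such that every local graph Γ(x) (the induced subgraph on the neighborhood of x) is strongly regular with parameters (v',k',λ',μ') where v' = k and k' = λ. Then for adjacent vertices x,y the induced subgraph on Γ(x)∩Γ(y) is λ'-regular, and for nonadjacent vertices x,y the induced subgraph on Γ(x)∩Γ(y) is μ'-regular. Consequently Γ satisfies the 4-vertex condition with α = λλ'/2 edges in each λ-graph and β = μμ'/2 edges in each μ-graph. -/
open SimpleGraph Finset
open scoped Classical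

/-!
For `z` in `Γ(x) ∩ Γ(y)`, the neighbours of `z` inside `Γ(x) ∩ Γ(y)` are the common neighbours of
all three of `x, y, z`. If `x ~ y` this set is the common neighbourhood of the adjacent vertices
`y, z` in the local graph `Γ(x)`, of size `λ'`; if `x ≁ y` it is the common neighbourhood of the
nonadjacent vertices `x, y` in the local graph `Γ(z)`, of size `μ'`. The edge counts then follow
from the handshake lemma, since `|Γ(x) ∩ Γ(y)|` is `λ` resp. `μ`.
-/

/-- The number of edges of `G` inside the set `s` (edges of the induced subgraph). -/
noncomputable def edgesIn {V : Type*} [Fintype V] (G : SimpleGraph V) (s : Set V) : ℕ :=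
  (G.induce s).edgeFinset.card

namespace SimpleGraph

variable {V : Type*} [Fintype V] (G : SimpleGraph V)

theorem two_mul_edgesIn_of_isRegularOfDegree {s : Set V} {d : ℕ} [(G.induce s).LocallyFinite]
    (hreg : (G.induce s).IsRegularOfDegree d) : 2 * edgesIn G s = Nat.card s * d := by
  rw [edgesIn, ← sum_degrees_eq_twice_card_edges]
  calc _ = ∑ _w : s, d := Finset.sum_congr rfl fun w _ => by convert hreg w
    _ = Nat.card s * d := by
      rw [sum_const, smul_eq_mul, card_univ, Nat.card_eq_fintype_card]

theorem degree_induce_commonNeighbors (a b : V) (c : G.commonNeighbors a b) :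
    (G.induce (G.commonNeighbors a b)).degree c =
      Nat.card ↥(G.neighborSet a ∩ G.neighborSet b ∩ G.neighborSet c) := by
  rw [← card_neighborSet_eq_degree, ← Nat.card_eq_fintype_card]
  exact Nat.card_congr <| (Equiv.subtypeSubtypeEquivSubtypeInter _ (G.Adj c)).trans <|
    Equiv.setCongr rfl

theorem card_commonNeighbors_induce_neighborSet (a : V) (b c : G.neighborSet a) :
    Fintype.card ((G.induce (G.neighborSet a)).commonNeighbors b c) =
      Nat.card ↥(G.neighborSet a ∩ G.neighborSet b ∩ G.neighborSet c) := by
  rw [← Nat.card_eq_fintype_card]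
  exact Nat.card_congr <|
    (Equiv.subtypeSubtypeEquivSubtypeInter _ (fun w => G.Adj b w ∧ G.Adj c w)).trans <|
    Equiv.subtypeEquivRight fun _ => and_assoc.symm

variable {G} {n d l' μ' : ℕ}

theorem isRegularOfDegree_induce_commonNeighbors_of_adj {x y : V}
    (hloc : (G.induce (G.neighborSet x)).IsSRGWith n d l' μ') (hxy : G.Adj x y) :
    (G.induce (G.commonNeighbors x y)).IsRegularOfDegree l' := by
  rintro ⟨z, hxz, hyz⟩
  rw [degree_induce_commonNeighbors, ← hloc.of_adj ⟨y, hxy⟩ ⟨z, hxz⟩ hyz,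
    card_commonNeighbors_induce_neighborSet]

theorem isRegularOfDegree_induce_commonNeighbors_of_not_adj
    (hloc : ∀ z : V, (G.induce (G.neighborSet z)).IsSRGWith n d l' μ') {x y : V}
    (hne : x ≠ y) (hxy : ¬G.Adj x y) :
    (G.induce (G.commonNeighbors x y)).IsRegularOfDegree μ' := by
  rintro ⟨z, hxz, hyz⟩
  have hne' : (⟨x, G.adj_symm hxz⟩ : G.neighborSet z) ≠ ⟨y, G.adj_symm hyz⟩ :=
    fun h => hne (congrArg Subtype.val h)
  rw [degree_induce_commonNeighbors, ← (hloc z).of_not_adj hne' hxy,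
    card_commonNeighbors_induce_neighborSet, Set.inter_comm, Set.inter_assoc]

end SimpleGraph

/-- If a strongly regular graph is locally strongly regular with parameters
`(k, λ, λ', μ')`, then every λ-graph is `λ'`-regular and every μ-graph is `μ'`-regular,
so that `G` satisfies the 4-vertex condition with `α = λλ'/2` and `β = μμ'/2`. -/
theorem stmt2 {V : Type*} [Fintype V] (G : SimpleGraph V) (v k l μ l' μ' : ℕ)
    (h : G.IsSRGWith v k l μ)
    (hloc : ∀ x : V, (G.induce (G.neighborSet x)).IsSRGWith k l l' μ') :
    (∀ x y : V, G.Adj x y →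
        (G.induce (G.commonNeighbors x y)).IsRegularOfDegree l') ∧
    (∀ x y : V, x ≠ y → ¬G.Adj x y →
        (G.induce (G.commonNeighbors x y)).IsRegularOfDegree μ') ∧
    (∀ x y : V, G.Adj x y → 2 * edgesIn G (G.commonNeighbors x y) = l * l') ∧
    (∀ x y : V, x ≠ y → ¬G.Adj x y →
        2 * edgesIn G (G.commonNeighbors x y) = μ * μ') := by
  have hadj x y (hxy : G.Adj x y) :=
    isRegularOfDegree_induce_commonNeighbors_of_adj (hloc x) hxy
  have hnadj x y (hne : x ≠ y) (hxy : ¬G.Adj x y) :=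
    isRegularOfDegree_induce_commonNeighbors_of_not_adj hloc hne hxy
  refine ⟨hadj, hnadj, fun x y hxy => ?_, fun x y hne hxy => ?_⟩
  · rw [G.two_mul_edgesIn_of_isRegularOfDegree (hadj x y hxy),
      Fintype.card_eq_nat_card.symm.trans (h.of_adj x y hxy)]
  · rw [G.two_mul_edgesIn_of_isRegularOfDegree (hnadj x y hne hxy),
      Fintype.card_eq_nat_card.symm.trans (h.of_not_adj hne hxy)]
end

section
/- For every integer v ≥ 19608 there is a prime power q ≥ 7 with (q^6−1)/(q−1) ≤ v ≤ q^6. (This is the numerical step used to prove that there are at least ⌊v^{1/6}⌋! strongly regular graphs of order at most v satisfying the 4-vertex condition.) -/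
lemma ipp (p k n : ℕ) (hp : Nat.Prime p) (hk : 0 < k) (h : p ^ k = n) : IsPrimePow n :=
  ⟨p, k, hp.prime, hk, h⟩

lemma div_eq6 (p : ℕ) (hp : 2 ≤ p) :
    (p ^ 6 - 1) / (p - 1) = p^5 + p^4 + p^3 + p^2 + p + 1 := by
  obtain ⟨m, rfl⟩ : ∃ m, p = m + 1 := ⟨p - 1, by omega⟩
  have hm : 0 < m := by omega
  have h1 : (m+1)^6 - 1 = m * ((m+1)^5+(m+1)^4+(m+1)^3+(m+1)^2+(m+1)+1) := by
    have h2 : (m+1)^6 = m * ((m+1)^5+(m+1)^4+(m+1)^3+(m+1)^2+(m+1)+1) + 1 := by ring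
    omega
  rw [h1, Nat.add_sub_cancel, Nat.mul_div_cancel_left _ hm]

/-- For every integer `v ≥ 19608` there is a prime power `q ≥ 7` with
`(q⁶−1)/(q−1) ≤ v ≤ q⁶`. -/
theorem stmt15 (v : ℕ) (hv : 19608 ≤ v) :
    ∃ q : ℕ, IsPrimePow q ∧ 7 ≤ q ∧ (q ^ 6 - 1) / (q - 1) ≤ v ∧ v ≤ q ^ 6 := by
  rcases le_or_gt v 68719476736 with hsmall | hbig
  · -- small case: v ≤ 64^6, covered by prime powers 7 ≤ q ≤ 64
    rcases le_or_gt v 117649 with h | h7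
    · exact ⟨7, ipp 7 1 7 (by norm_num) (by norm_num) (by norm_num), by norm_num, by norm_num; omega, by norm_num; omega⟩
    rcases le_or_gt v 262144 with h | h8
    · exact ⟨8, ipp 2 3 8 (by norm_num) (by norm_num) (by norm_num), by norm_num, by norm_num; omega, by norm_num; omega⟩
    rcases le_or_gt v 531441 with h | h9
    · exact ⟨9, ipp 3 2 9 (by norm_num) (by norm_num) (by norm_num), by norm_num, by norm_num; omega, by norm_num; omega⟩
    rcases le_or_gt v 1771561 with h | h11
    · exact ⟨11, ipp 11 1 11 (by norm_num) (by norm_num) (by norm_num), by norm_num, by norm_num; omega, by norm_num; omega⟩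
    rcases le_or_gt v 4826809 with h | h13
    · exact ⟨13, ipp 13 1 13 (by norm_num) (by norm_num) (by norm_num), by norm_num, by norm_num; omega, by norm_num; omega⟩
    rcases le_or_gt v 16777216 with h | h16
    · exact ⟨16, ipp 2 4 16 (by norm_num) (by norm_num) (by norm_num), by norm_num, by norm_num; omega, by norm_num; omega⟩
    rcases le_or_gt v 24137569 with h | h17
    · exact ⟨17, ipp 17 1 17 (by norm_num) (by norm_num) (by norm_num), by norm_num, by norm_num; omega, by norm_num; omega⟩
    rcases le_or_gt v 47045881 with h | h19
    · exact ⟨19, ipp 19 1 19 (by norm_num) (by norm_num) (by norm_num), by norm_num, by norm_num; omega, by norm_num; omega⟩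
    rcases le_or_gt v 148035889 with h | h23
    · exact ⟨23, ipp 23 1 23 (by norm_num) (by norm_num) (by norm_num), by norm_num, by norm_num; omega, by norm_num; omega⟩
    rcases le_or_gt v 244140625 with h | h25
    · exact ⟨25, ipp 5 2 25 (by norm_num) (by norm_num) (by norm_num), by norm_num, by norm_num; omega, by norm_num; omega⟩
    rcases le_or_gt v 387420489 with h | h27
    · exact ⟨27, ipp 3 3 27 (by norm_num) (by norm_num) (by norm_num), by norm_num, by norm_num; omega, by norm_num; omega⟩
    rcases le_or_gt v 594823321 with h | h29
    · exact ⟨29, ipp 29 1 29 (by norm_num) (by norm_num) (by norm_num), by norm_num, by norm_num; omega, by norm_num; omega⟩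
    rcases le_or_gt v 887503681 with h | h31
    · exact ⟨31, ipp 31 1 31 (by norm_num) (by norm_num) (by norm_num), by norm_num, by norm_num; omega, by norm_num; omega⟩
    rcases le_or_gt v 1073741824 with h | h32
    · exact ⟨32, ipp 2 5 32 (by norm_num) (by norm_num) (by norm_num), by norm_num, by norm_num; omega, by norm_num; omega⟩
    rcases le_or_gt v 2565726409 with h | h37
    · exact ⟨37, ipp 37 1 37 (by norm_num) (by norm_num) (by norm_num), by norm_num, by norm_num; omega, by norm_num; omega⟩
    rcases le_or_gt v 4750104241 with h | h41
    · exact ⟨41, ipp 41 1 41 (by norm_num) (by norm_num) (by norm_num), by norm_num, by norm_num; omega, by norm_num; omega⟩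
    rcases le_or_gt v 6321363049 with h | h43
    · exact ⟨43, ipp 43 1 43 (by norm_num) (by norm_num) (by norm_num), by norm_num, by norm_num; omega, by norm_num; omega⟩
    rcases le_or_gt v 10779215329 with h | h47
    · exact ⟨47, ipp 47 1 47 (by norm_num) (by norm_num) (by norm_num), by norm_num, by norm_num; omega, by norm_num; omega⟩
    rcases le_or_gt v 13841287201 with h | h49
    · exact ⟨49, ipp 7 2 49 (by norm_num) (by norm_num) (by norm_num), by norm_num, by norm_num; omega, by norm_num; omega⟩
    rcases le_or_gt v 22164361129 with h | h53
    · exact ⟨53, ipp 53 1 53 (by norm_num) (by norm_num) (by norm_num), by norm_num, by norm_num; omega, by norm_num; omega⟩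
    rcases le_or_gt v 42180533641 with h | h59
    · exact ⟨59, ipp 59 1 59 (by norm_num) (by norm_num) (by norm_num), by norm_num, by norm_num; omega, by norm_num; omega⟩
    rcases le_or_gt v 51520374361 with h | h61
    · exact ⟨61, ipp 61 1 61 (by norm_num) (by norm_num) (by norm_num), by norm_num, by norm_num; omega, by norm_num; omega⟩
    exact ⟨64, ipp 2 6 64 (by norm_num) (by norm_num) (by norm_num), by norm_num, by norm_num; omega, by norm_num; omega⟩
  · -- large case: Bertrand
    set n := Nat.findGreatest (fun k => k ^ 6 ≤ v) v with hn
    have h64v : (64:ℕ) ≤ v := by omega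
    have hP64 : (64:ℕ) ^ 6 ≤ v := by norm_num; omega
    have hn64 : 64 ≤ n := Nat.le_findGreatest h64v hP64
    have hn6 : n ^ 6 ≤ v := Nat.findGreatest_spec (P := fun k => k ^ 6 ≤ v) h64v hP64
    have hlt : v < (n + 1) ^ 6 := by
      by_contra hcon
      push_neg at hcon
      have hnv : n + 1 ≤ v := le_trans (Nat.le_self_pow (by norm_num) _) hcon
      exact Nat.findGreatest_is_greatest (P := fun k => k ^ 6 ≤ v)
        (by rw [← hn]; exact Nat.lt_succ_self n) hnv hcon
    obtain ⟨p, pp, hnp, hp2n⟩ := Nat.exists_prime_lt_and_le_two_mul n (by omega)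
    refine ⟨p, pp.isPrimePow, by omega, ?_, ?_⟩
    · rw [div_eq6 p (by omega)]
      have hS : p ^ 5 + p ^ 4 + p ^ 3 + p ^ 2 + p + 1 ≤ 2 * p ^ 5 := by
        obtain ⟨m, rfl⟩ : ∃ m, p = m + 2 := ⟨p - 2, by omega⟩
        nlinarith [Nat.zero_le m, Nat.zero_le (m ^ 2), Nat.zero_le (m ^ 3), Nat.zero_le (m ^ 4)]
      have h2 : 2 * p ^ 5 ≤ 2 * (2 * n) ^ 5 := by
        have := Nat.pow_le_pow_left hp2n 5
        omega
      have h3 : 2 * (2 * n) ^ 5 ≤ n ^ 6 := by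
        calc 2 * (2 * n) ^ 5 = 64 * n ^ 5 := by ring
          _ ≤ n * n ^ 5 := Nat.mul_le_mul_right _ hn64
          _ = n ^ 6 := by ring
      omega
    · calc v ≤ (n + 1) ^ 6 := le_of_lt hlt
        _ ≤ p ^ 6 := Nat.pow_le_pow_left (by omega) 6
end

section
/- Let q be a prime power and d ≥ 3, and set m_i = (q^i−1)/(q−1). Let ℋ be the set of hyperplanes of a d-dimensional 𝔽_q-space U, so |ℋ| = m_d. Then m_d! / |PΓL(U)|^2 > (q^{d−2})! whenever (d,q) ≠ (3,2), where |PΓL(U)| = e·|PGL(d,q)| ≤ e·q^{d^2} with q = p^e. More precisely: with N = |PΓL_d(q)|, one has m_d!/N^2 > (q^{d-2})! for all prime powers q and d ≥ 3 with (d,q) ≠ (3,2). -/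
open Finset

open scoped Nat

/-!
Since `e < p ^ e = q`, the order `N` is at most `q ^ (d * d)`. Put `a = q ^ (d - 2)` and
`m = m_d = ∑_{i<d} q ^ i`. Then `m - a ≥ q ^ (d - 1) + 1` and
`m! ≥ a! · (a + 1) ^ (m - a) > a! · a ^ (m - a)`, so it suffices that
`q ^ (2 d²) ≤ q ^ ((d - 2)(m - a))`, i.e. `2 d² ≤ (d - 2)(q ^ (d - 1) + 1)`. This fails only for
`(d, q) ∈ {(3, 2), (3, 3), (3, 4), (4, 2)}`; the last three are checked numerically.
-/

theorem pow_sub_mul_factorial_lt_factorial {a m : ℕ} (h : a < m) : a ^ (m - a) * a ! < m ! :=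
  calc a ^ (m - a) * a ! < (a + 1) ^ (m - a) * a ! := by
        gcongr <;> omega
    _ ≤ (a + (m - a))! := by rw [mul_comm]; exact Nat.factorial_mul_pow_le_factorial
    _ = m ! := by rw [Nat.add_sub_cancel' h.le]

theorem two_mul_sq_le_mul_two_pow_add_one {d : ℕ} (hd : 5 ≤ d) :
    2 * (d * d) ≤ (d - 2) * (2 ^ (d - 1) + 1) := by
  obtain ⟨k, rfl⟩ := Nat.exists_eq_add_of_le' hd
  simp only [show k + 5 - 2 = k + 3 by omega, show k + 5 - 1 = k + 4 by omega]
  clear hd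
  induction k with
  | zero => norm_num
  | succ k ih =>
    have : 16 ≤ 2 ^ (k + 4) :=
      le_trans (by norm_num) (Nat.pow_le_pow_right two_pos (by omega : 4 ≤ k + 4))
    rw [show k + 1 + 4 = (k + 4) + 1 by ring, pow_succ]
    nlinarith

theorem add_pow_add_one_le_sum_range_pow (q : ℕ) {d : ℕ} (hd : 3 ≤ d) :
    q ^ (d - 2) + (q ^ (d - 1) + 1) ≤ ∑ i ∈ range d, q ^ i := by
  obtain ⟨k, rfl⟩ := Nat.exists_eq_add_of_le' hd
  have hone : 1 ≤ ∑ i ∈ range (k + 1), q ^ i :=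
    single_le_sum (f := fun i => q ^ i) (fun _ _ => Nat.zero_le _) (mem_range.2 k.succ_pos)
  rw [show k + 3 = k + 1 + 1 + 1 by ring, sum_range_succ, sum_range_succ]
  simp only [show k + 1 + 1 + 1 - 2 = k + 1 by omega, show k + 1 + 1 + 1 - 1 = k + 2 by omega]
  omega

theorem one_add_div_two_add_sum_Icc_two {d : ℕ} (hd : 1 ≤ d) :
    1 + d * (d - 1) / 2 + ∑ i ∈ Icc 2 d, i = d * d := by
  have hgauss := sum_range_id_mul_two (d + 1)
  rw [range_eq_Ico, ← sum_Ico_consecutive _ (Nat.zero_le 2) (by omega : 2 ≤ d + 1),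
    Ico_add_one_right_eq_Icc] at hgauss
  have htri := Nat.div_mul_cancel (Nat.even_mul_pred_self d).two_dvd
  obtain ⟨k, rfl⟩ := Nat.exists_eq_add_of_le' hd
  simp only [Nat.add_sub_cancel, ← range_eq_Ico, sum_range_succ, sum_range_zero]
    at hgauss htri ⊢
  nlinarith

theorem pow_sq_mul_factorial_lt_of_two_mul_sq_le {q d : ℕ} (hq : 2 ≤ q) (hd : 3 ≤ d)
    (h : 2 * (d * d) ≤ (d - 2) * (q ^ (d - 1) + 1)) :
    (q ^ (d * d)) ^ 2 * (q ^ (d - 2))! < (∑ i ∈ range d, q ^ i)! := by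
  set a := q ^ (d - 2)
  set m := ∑ i ∈ range d, q ^ i
  have hgap : a + (q ^ (d - 1) + 1) ≤ m := add_pow_add_one_le_sum_range_pow q hd
  calc (q ^ (d * d)) ^ 2 * a ! = q ^ (2 * (d * d)) * a ! := by rw [← pow_mul, mul_comm 2]
    _ ≤ q ^ ((d - 2) * (m - a)) * a ! := by
        have hexp : 2 * (d * d) ≤ (d - 2) * (m - a) := h.trans (Nat.mul_le_mul_left _ (by omega))
        gcongr
        omega
    _ = a ^ (m - a) * a ! := by rw [pow_mul]
    _ < m ! := pow_sub_mul_factorial_lt_factorial (by omega)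

theorem pow_sq_mul_factorial_lt_factorial_sum_range_pow {q d : ℕ} (hq : 2 ≤ q) (hd : 3 ≤ d)
    (hne : ¬(d = 3 ∧ q = 2)) :
    (q ^ (d * d)) ^ 2 * (q ^ (d - 2))! < (∑ i ∈ range d, q ^ i)! := by
  obtain rfl | rfl | hd5 : d = 3 ∨ d = 4 ∨ 5 ≤ d := by omega
  · obtain rfl | rfl | hq5 : q = 3 ∨ q = 4 ∨ 5 ≤ q := by omega
    · decide
    · decide
    · refine pow_sq_mul_factorial_lt_of_two_mul_sq_le hq le_rfl ?_
      have : 5 ^ 2 ≤ q ^ 2 := Nat.pow_le_pow_left hq5 2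
      norm_num at this ⊢
      omega
  · obtain rfl | hq3 : q = 2 ∨ 3 ≤ q := by omega
    · decide
    · refine pow_sq_mul_factorial_lt_of_two_mul_sq_le hq hd ?_
      have : 3 ^ 3 ≤ q ^ 3 := Nat.pow_le_pow_left hq3 3
      norm_num at this ⊢
      omega
  · refine pow_sq_mul_factorial_lt_of_two_mul_sq_le hq hd ?_
    calc 2 * (d * d) ≤ (d - 2) * (2 ^ (d - 1) + 1) := two_mul_sq_le_mul_two_pow_add_one hd5
      _ ≤ (d - 2) * (q ^ (d - 1) + 1) := by gcongr

theorem mul_pow_mul_prod_pow_sub_one_le_pow_sq {e q d : ℕ} (he : e ≤ q) (hd : 1 ≤ d) :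
    e * q ^ (d * (d - 1) / 2) * ∏ i ∈ Icc 2 d, (q ^ i - 1) ≤ q ^ (d * d) :=
  calc e * q ^ (d * (d - 1) / 2) * ∏ i ∈ Icc 2 d, (q ^ i - 1)
      ≤ q * q ^ (d * (d - 1) / 2) * ∏ i ∈ Icc 2 d, q ^ i := by
        gcongr with i
        exact Nat.sub_le _ _
    _ = q ^ (d * d) := by
        rw [prod_pow_eq_pow_sum, ← pow_succ', ← pow_add, ← one_add_div_two_add_sum_Icc_two hd,
          add_comm 1]

/-- Counting step of Theorem 7.9: with `q = p^e` a prime power, `d ≥ 3`,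
`m_d = (q^d−1)/(q−1)` the number of hyperplanes of `PG(d−1,q)`, and
`N = |PΓL_d(q)| = e·q^{d(d−1)/2}·∏_{i=2}^d (q^i−1)`, one has
`m_d! / N² > (q^{d−2})!`, i.e. `N² · (q^{d−2})! < m_d!`, whenever `(d,q) ≠ (3,2)`. -/
theorem stmt16 (p e d : ℕ) (hp : p.Prime) (he : 1 ≤ e) (hd : 3 ≤ d)
    (q : ℕ) (hq : q = p ^ e) (hne : ¬(d = 3 ∧ q = 2))
    (N : ℕ) (hN : N = e * q ^ (d * (d - 1) / 2) * ∏ i ∈ Finset.Icc 2 d, (q ^ i - 1)) :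
    N ^ 2 * Nat.factorial (q ^ (d - 2)) < Nat.factorial ((q ^ d - 1) / (q - 1)) := by
  have he_lt_q : e < q := hq ▸ Nat.lt_pow_self hp.one_lt
  have hq2 : 2 ≤ q := by omega
  have hNle : N ≤ q ^ (d * d) := hN ▸ mul_pow_mul_prod_pow_sub_one_le_pow_sq he_lt_q.le (by omega)
  rw [← Nat.geomSum_eq hq2]
  calc N ^ 2 * (q ^ (d - 2))! ≤ (q ^ (d * d)) ^ 2 * (q ^ (d - 2))! := by gcongr
    _ < (∑ i ∈ range d, q ^ i)! := pow_sq_mul_factorial_lt_factorial_sum_range_pow hq2 hd hne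
end

section
/- Let Γ be a strongly regular graph with parameters (v,k,λ,μ). Then Σ_{ab ∈ E(Γ)} [C(λ,2) − e(Γ(a)∩Γ(b))] = Σ_{ab ∉ E(Γ), a ≠ b} e(Γ(a)∩Γ(b)), where e(S) denotes the number of edges of Γ inside S and E(Γ) is the edge set. -/
open SimpleGraph Finset
open scoped Classical

lemma L1 {V : Type*} [Fintype V] (G : SimpleGraph V) (s : Set V) :
    2 * edgesIn G s
      = #(univ.filter fun p : V × V => G.Adj p.1 p.2 ∧ p.1 ∈ s ∧ p.2 ∈ s) := by
  rw [edgesIn, SimpleGraph.two_mul_card_edgeFinset]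
  refine Finset.card_bij' (fun p _ => ((p.1 : V), (p.2 : V)))
    (fun p hp => (⟨p.1, ?_⟩, ⟨p.2, ?_⟩)) ?_ ?_ ?_ ?_
  · exact (Finset.mem_filter.1 hp).2.2.1
  · exact (Finset.mem_filter.1 hp).2.2.2
  · intro p hp
    simp only [Finset.mem_filter, Finset.mem_univ, true_and] at hp ⊢
    exact ⟨hp, p.1.2, p.2.2⟩
  · intro p hp
    simp only [Finset.mem_filter, Finset.mem_univ, true_and, comap_adj,
      Function.Embedding.coe_subtype] at hp ⊢
    exact hp.1
  · intro p hp; rfl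
  · intro p hp; rfl

lemma L2 {V : Type*} [Fintype V] (F : V → V → ℕ) (hF : ∀ a b, F a b = F b a)
    (P : Finset (Sym2 V)) (hP : ∀ p ∈ P, ¬ p.IsDiag) :
    ∑ q ∈ univ.filter (fun q : V × V => s(q.1, q.2) ∈ P), F q.1 q.2
      = 2 * ∑ p ∈ P, Sym2.lift ⟨F, hF⟩ p := by
  rw [← Finset.sum_fiberwise_of_maps_to (g := fun q : V × V => s(q.1, q.2))
    (t := P) (fun q hq => (Finset.mem_filter.1 hq).2) (fun q => F q.1 q.2),
    Finset.mul_sum]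
  refine Finset.sum_congr rfl ?_
  intro p hp
  induction p with
  | _ a b =>
    have hab : a ≠ b := by
      intro h; exact hP _ hp (by simp [h])
    have : (univ.filter fun q : V × V => s(q.1, q.2) ∈ P).filter
        (fun q : V × V => s(q.1, q.2) = s(a, b)) = {(a, b), (b, a)} := by
      ext q
      simp only [Finset.mem_filter, Finset.mem_univ, true_and, Finset.mem_insert,
        Finset.mem_singleton, Sym2.eq_iff, Prod.ext_iff]
      constructor
      · rintro ⟨-, (⟨h1, h2⟩ | ⟨h1, h2⟩)⟩
        · left; exact ⟨h1, h2⟩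
        · right; exact ⟨h1, h2⟩
      · rintro (⟨h1, h2⟩ | ⟨h1, h2⟩) <;> subst h1 <;> subst h2 <;>
          simp_all [hp, Sym2.eq_swap]
    rw [this, Finset.sum_pair (by simp [hab, Prod.ext_iff])]
    simp only [Sym2.lift_mk]
    rw [hF b a]; ring

lemma L3 {V : Type*} [Fintype V] (G : SimpleGraph V) {v k l μ : ℕ}
    (h : G.IsSRGWith v k l μ) :
    ∑ q ∈ univ.filter (fun q : V × V => q.1 ≠ q.2),
      #(univ.filter fun p : V × V => G.Adj p.1 p.2 ∧
        p.1 ∈ G.commonNeighbors q.1 q.2 ∧ p.2 ∈ G.commonNeighbors q.1 q.2)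
      = #(univ.filter fun p : V × V => G.Adj p.1 p.2) * (l * (l - 1)) := by
  have step1 : ∀ q : V × V,
      #(univ.filter fun p : V × V => G.Adj p.1 p.2 ∧
        p.1 ∈ G.commonNeighbors q.1 q.2 ∧ p.2 ∈ G.commonNeighbors q.1 q.2)
      = ∑ p ∈ univ.filter (fun p : V × V => G.Adj p.1 p.2),
          if p.1 ∈ G.commonNeighbors q.1 q.2 ∧ p.2 ∈ G.commonNeighbors q.1 q.2
            then 1 else 0 := by
    intro q
    rw [← Finset.card_filter, Finset.filter_filter]
  simp_rw [step1]
  rw [Finset.sum_comm]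
  rw [Finset.sum_congr rfl (fun p hp => ?_), Finset.sum_const, smul_eq_mul]
  have hadj : G.Adj p.1 p.2 := (Finset.mem_filter.1 hp).2
  have key : (univ.filter fun q : V × V => q.1 ≠ q.2).filter
      (fun q : V × V => p.1 ∈ G.commonNeighbors q.1 q.2 ∧
        p.2 ∈ G.commonNeighbors q.1 q.2)
      = (G.commonNeighbors p.1 p.2).toFinset.offDiag := by
    ext q
    simp only [Finset.mem_filter, Finset.mem_univ, true_and, Finset.mem_offDiag,
      Set.mem_toFinset, SimpleGraph.mem_commonNeighbors]
    constructor
    · rintro ⟨hne, ⟨h1, h2⟩, h3, h4⟩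
      exact ⟨⟨h1.symm, h3.symm⟩, ⟨h2.symm, h4.symm⟩, hne⟩
    · rintro ⟨⟨h1, h3⟩, ⟨h2, h4⟩, hne⟩
      exact ⟨hne, ⟨h1.symm, h2.symm⟩, h3.symm, h4.symm⟩
  rw [← Finset.card_filter, key, Finset.offDiag_card, Set.toFinset_card,
    h.of_adj _ _ hadj, Nat.mul_sub_one]

lemma Ltwochoose (l : ℕ) : 2 * Nat.choose l 2 = l * (l - 1) := by
  rw [Nat.choose_two_right, Nat.mul_div_cancel']
  rcases l with _ | n
  · simp
  · simpa [mul_comm] using (Nat.even_mul_succ_self n).two_dvd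

/-- Double count of `K₄`-minus-an-edge configurations in a strongly regular graph:
`Σ_{{a,b} ∈ E} (C(λ,2) − e(Γ(a)∩Γ(b))) = Σ_{{a,b} ∉ E, a ≠ b} e(Γ(a)∩Γ(b))`,
where `e(S)` is the number of edges of `Γ` inside `S`. -/
theorem stmt17 {V : Type*} [Fintype V] (G : SimpleGraph V) (v k l μ : ℕ)
    (h : G.IsSRGWith v k l μ) :
    ∑ e ∈ G.edgeFinset,
        Sym2.lift ⟨fun a b => Nat.choose l 2 - edgesIn G (G.commonNeighbors a b),
          fun a b => by simp only []; rw [G.commonNeighbors_symm]⟩ e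
      = ∑ e ∈ Finset.univ.filter (fun e : Sym2 V => ¬e.IsDiag ∧ e ∉ G.edgeSet),
          Sym2.lift ⟨fun a b => edgesIn G (G.commonNeighbors a b),
            fun a b => by simp only []; rw [G.commonNeighbors_symm]⟩ e := by
  set F : V → V → ℕ := fun a b => edgesIn G (G.commonNeighbors a b) with hFdef
  have hF : ∀ a b, F a b = F b a := fun a b => by
    simp only [hFdef]; rw [G.commonNeighbors_symm]
  -- the key identity
  have key : ∑ e ∈ G.edgeFinset, Sym2.lift ⟨F, hF⟩ e
      + ∑ e ∈ Finset.univ.filter (fun e : Sym2 V => ¬e.IsDiag ∧ e ∉ G.edgeSet),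
          Sym2.lift ⟨F, hF⟩ e
      = #G.edgeFinset * Nat.choose l 2 := by
    have core := L3 G h
    have doubling : ∀ q : V × V, 2 * F q.1 q.2
        = #(univ.filter fun p : V × V => G.Adj p.1 p.2 ∧
            p.1 ∈ G.commonNeighbors q.1 q.2 ∧ p.2 ∈ G.commonNeighbors q.1 q.2) := by
      intro q
      convert L1 G (G.commonNeighbors q.1 q.2) using 2
      congr!
    rw [Finset.sum_congr rfl (fun q _ => (doubling q).symm)] at core
    -- split the ne-sum into adjacent and non-adjacent parts
    have split : ∑ q ∈ univ.filter (fun q : V × V => q.1 ≠ q.2), 2 * F q.1 q.2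
        = ∑ q ∈ univ.filter (fun q : V × V => G.Adj q.1 q.2), 2 * F q.1 q.2
          + ∑ q ∈ univ.filter (fun q : V × V => q.1 ≠ q.2 ∧ ¬ G.Adj q.1 q.2),
              2 * F q.1 q.2 := by
      rw [← Finset.sum_filter_add_sum_filter_not
        (univ.filter (fun q : V × V => q.1 ≠ q.2)) (fun q => G.Adj q.1 q.2),
        Finset.filter_filter, Finset.filter_filter]
      congr 1
      · exact Finset.sum_congr (Finset.filter_congr (fun q _ => by
          simp only [and_iff_right_iff_imp]
          exact fun hq => hq.ne)) (fun _ _ => rfl)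
    rw [split] at core
    have hA : ∑ q ∈ univ.filter (fun q : V × V => G.Adj q.1 q.2), F q.1 q.2
        = 2 * ∑ e ∈ G.edgeFinset, Sym2.lift ⟨F, hF⟩ e := by
      rw [← L2 F hF G.edgeFinset (fun p hp =>
        G.not_isDiag_of_mem_edgeSet (SimpleGraph.mem_edgeFinset.1 hp))]
      exact Finset.sum_congr (Finset.filter_congr (fun q _ => by
        rcases q with ⟨a, b⟩
        simp [SimpleGraph.mem_edgeFinset, SimpleGraph.mem_edgeSet])) (fun _ _ => rfl)
    have hN : ∑ q ∈ univ.filter (fun q : V × V => q.1 ≠ q.2 ∧ ¬ G.Adj q.1 q.2),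
          F q.1 q.2
        = 2 * ∑ e ∈ Finset.univ.filter
            (fun e : Sym2 V => ¬e.IsDiag ∧ e ∉ G.edgeSet), Sym2.lift ⟨F, hF⟩ e := by
      rw [← L2 F hF _ (fun p hp => (Finset.mem_filter.1 hp).2.1)]
      exact Finset.sum_congr (Finset.filter_congr (fun q _ => by
        rcases q with ⟨a, b⟩
        simp [SimpleGraph.mem_edgeSet, Sym2.isDiag_iff_proj_eq])) (fun _ _ => rfl)
    have hcard : 2 * #G.edgeFinset
        = #(univ.filter fun p : V × V => G.Adj p.1 p.2) := by
      rw [SimpleGraph.two_mul_card_edgeFinset]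
    have hx : #(univ.filter fun p : V × V => G.Adj p.1 p.2) * (l * (l - 1))
        = 4 * (#G.edgeFinset * Nat.choose l 2) := by
      rw [← hcard, ← Ltwochoose l]; ring
    rw [hx, ← Finset.mul_sum, ← Finset.mul_sum, hA, hN] at core
    omega
  -- the per-edge bound
  have bound : ∀ e ∈ G.edgeFinset, Sym2.lift ⟨F, hF⟩ e ≤ Nat.choose l 2 := by
    intro e he
    induction e with
    | _ a b =>
      have hadj : G.Adj a b := SimpleGraph.mem_edgeFinset.1 he
      have := SimpleGraph.card_edgeFinset_le_card_choose_two
        (G := G.induce (G.commonNeighbors a b))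
      rw [h.of_adj a b hadj] at this
      simp only [Sym2.lift_mk, hFdef]
      unfold edgesIn
      convert this using 2
      congr!
  have lhs_eq : ∑ e ∈ G.edgeFinset,
      Sym2.lift ⟨fun a b => Nat.choose l 2 - edgesIn G (G.commonNeighbors a b),
        fun a b => by simp only []; rw [G.commonNeighbors_symm]⟩ e
      = ∑ e ∈ G.edgeFinset, (Nat.choose l 2 - Sym2.lift ⟨F, hF⟩ e) := by
    refine Finset.sum_congr rfl (fun e _ => ?_)
    induction e with
    | _ a b => simp [hFdef]
  have rhs_eq : (∑ e ∈ Finset.univ.filter (fun e : Sym2 V => ¬e.IsDiag ∧ e ∉ G.edgeSet),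
        Sym2.lift ⟨fun a b => edgesIn G (G.commonNeighbors a b),
          fun a b => by simp only []; rw [G.commonNeighbors_symm]⟩ e)
      = ∑ e ∈ Finset.univ.filter (fun e : Sym2 V => ¬e.IsDiag ∧ e ∉ G.edgeSet),
          Sym2.lift ⟨F, hF⟩ e := rfl
  rw [lhs_eq, rhs_eq, Finset.sum_tsub_distrib G.edgeFinset bound, Finset.sum_const,
    smul_eq_mul]
  omega
end
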